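/- arXiv:2102.05393 — 4 statements merged into one kernel-verified Lean document; each statement's English description precedes it below -/
import Mathlib

section
/- Let q : [0,1] → ℝ be continuous, let c > 0 and ℓ, ε, λ ∈ ℝ, and let u : [0,1] → ℝ be twice continuously differentiable with −(1/c)·u″(t) + ε·q(t)·u(t) + (2ℓ − c)·u(t) = λ·u(t) for all t ∈ [0,1]. Define y(t) := C_{c−ℓ}(t)·(u(t), u′(t)/c)ᵀ and R(t) := C_{c−ℓ}(t)·T·C_{c−ℓ}(t)ᵀ. Then y satisfies J·y′(t) + ε·q(t)·R(t)·y(t) + ℓ·(2R(t) − I)·y(t) = λ·R(t)·y(t) for all t ∈ [0,1]. -/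
open Set Matrix

/-- The matrix `J = [[0,-1],[1,0]]` over `ℝ`. -/
noncomputable def Jr : Matrix (Fin 2) (Fin 2) ℝ := !![0, -1; 1, 0]

/-- The rotation matrix `C_c(t)` with rows `(cos(ct), −sin(ct))`, `(sin(ct), cos(ct))`. -/
noncomputable def Cmat (c t : ℝ) : Matrix (Fin 2) (Fin 2) ℝ :=
  !![Real.cos (c * t), -Real.sin (c * t); Real.sin (c * t), Real.cos (c * t)]

/-- The matrix `T = diag(1,0)`. -/
noncomputable def Tmat : Matrix (Fin 2) (Fin 2) ℝ := !![1, 0; 0, 0]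

/-- The matrix `R_c(t) := C_c(t) T C_c(t)ᵀ`. -/
noncomputable def Rmat (c t : ℝ) : Matrix (Fin 2) (Fin 2) ℝ :=
  Cmat c t * Tmat * (Cmat c t)ᵀ

/-!
`C_a(t) = cos(at) I + sin(at) J` is the flow `exp(atJ)`: it commutes with `J`, is orthogonal, and
satisfies `C_a' = a J C_a`. Hence for the lift `x = (u, u'/c)` and `y = C_a x` one has
`y' = C_a (a J x + x')`, `J C_a = C_a J` and `R C_a = C_a T`, so the Dirac-type system for `y` is
`C_a` applied to a system for `x`. With `a = c - ℓ` the first row of the latter is the Schrödinger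
equation and the second row is the identity `u' = c · (u'/c)`.
-/

lemma Jr_mul_Jr : Jr * Jr = -1 := by
  ext i j; fin_cases i <;> fin_cases j <;> simp [Jr]

lemma Jr_mulVec_vec2 (p q : ℝ) : Jr *ᵥ ![p, q] = ![-q, p] := by
  ext i; fin_cases i <;> simp [Jr]

lemma Tmat_mulVec_vec2 (p q : ℝ) : Tmat *ᵥ ![p, q] = ![p, 0] := by
  ext i; fin_cases i <;> simp [Tmat]

lemma Cmat_eq_cos_smul_one_add_sin_smul_Jr (c t : ℝ) :
    Cmat c t = Real.cos (c * t) • 1 + Real.sin (c * t) • Jr := by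
  ext i j; fin_cases i <;> fin_cases j <;> simp [Cmat, Jr]

lemma Cmat_mulVec (c t : ℝ) (v : Fin 2 → ℝ) :
    Cmat c t *ᵥ v = Real.cos (c * t) • v + Real.sin (c * t) • Jr *ᵥ v := by
  rw [Cmat_eq_cos_smul_one_add_sin_smul_Jr, add_mulVec, smul_mulVec, smul_mulVec, one_mulVec]

lemma commute_Jr_Cmat (c t : ℝ) : Commute Jr (Cmat c t) := by
  rw [Cmat_eq_cos_smul_one_add_sin_smul_Jr]
  exact ((Commute.one_right Jr).smul_right _).add_right ((Commute.refl Jr).smul_right _)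

lemma Cmat_transpose_mul_self (c t : ℝ) : (Cmat c t)ᵀ * Cmat c t = 1 := by
  ext i j
  fin_cases i <;> fin_cases j <;> simp [Cmat, mul_apply, Fin.sum_univ_two] <;> ring_nf <;> simp

lemma Rmat_mul_Cmat (c t : ℝ) : Rmat c t * Cmat c t = Cmat c t * Tmat := by
  rw [Rmat, Matrix.mul_assoc, Cmat_transpose_mul_self, Matrix.mul_one]

lemma Jr_mulVec_Cmat_mulVec (c t : ℝ) (v : Fin 2 → ℝ) :
    Jr *ᵥ (Cmat c t *ᵥ v) = Cmat c t *ᵥ (Jr *ᵥ v) := by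
  rw [mulVec_mulVec, mulVec_mulVec, (commute_Jr_Cmat c t).eq]

lemma Rmat_mulVec_Cmat_mulVec (c t : ℝ) (v : Fin 2 → ℝ) :
    Rmat c t *ᵥ (Cmat c t *ᵥ v) = Cmat c t *ᵥ (Tmat *ᵥ v) := by
  rw [mulVec_mulVec, mulVec_mulVec, Rmat_mul_Cmat]

lemma hasDerivAt_vec2 {E : Type*} [NormedAddCommGroup E] [NormedSpace ℝ E] {f g : ℝ → E}
    {f' g' : E} {t : ℝ} (hf : HasDerivAt f f' t) (hg : HasDerivAt g g' t) :
    HasDerivAt (fun s => ![f s, g s]) ![f', g'] t := by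
  rw [hasDerivAt_pi]
  intro i
  fin_cases i <;> simpa

lemma HasDerivAt.const_mulVec {m n : Type*} [Fintype m] [Fintype n] (A : Matrix m n ℝ)
    {x : ℝ → n → ℝ} {x' : n → ℝ} {t : ℝ} (hx : HasDerivAt x x' t) :
    HasDerivAt (fun s => A *ᵥ x s) (A *ᵥ x') t :=
  (mulVecLin A).toContinuousLinearMap.hasFDerivAt.comp_hasDerivAt t hx

lemma hasDerivAt_Cmat_mulVec (a : ℝ) {x : ℝ → Fin 2 → ℝ} {x' : Fin 2 → ℝ} {t : ℝ}
    (hx : HasDerivAt x x' t) :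
    HasDerivAt (fun s => Cmat a s *ᵥ x s) (Cmat a t *ᵥ (a • Jr *ᵥ x t + x')) t := by
  have hlin : HasDerivAt (fun s : ℝ => a * s) a t := by
    simpa using (hasDerivAt_id t).const_mul a
  have hcos := ((Real.hasDerivAt_cos (a * t)).comp t hlin).fun_smul hx
  have hsin := ((Real.hasDerivAt_sin (a * t)).comp t hlin).fun_smul (hx.const_mulVec Jr)
  simp only [Cmat_mulVec]
  refine (hcos.fun_add hsin).congr_deriv ?_
  simp only [Function.comp_apply, mulVec_add, mulVec_smul, mulVec_mulVec, Jr_mul_Jr, neg_mulVec,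
    one_mulVec]
  module

lemma unrotated_system_of_lifted {a k ℓ μ : ℝ} (t : ℝ) {v w : Fin 2 → ℝ}
    (h : Jr *ᵥ (a • Jr *ᵥ v + w) + k • Tmat *ᵥ v + ℓ • ((2 : ℝ) • Tmat *ᵥ v - v)
      = μ • Tmat *ᵥ v) :
    Jr *ᵥ (Cmat a t *ᵥ (a • Jr *ᵥ v + w)) + k • (Rmat a t *ᵥ (Cmat a t *ᵥ v))
        + ℓ • (((2 : ℝ) • Rmat a t - 1) *ᵥ (Cmat a t *ᵥ v))
      = μ • (Rmat a t *ᵥ (Cmat a t *ᵥ v)) := by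
  simp only [sub_mulVec, smul_mulVec, one_mulVec, Jr_mulVec_Cmat_mulVec, Rmat_mulVec_Cmat_mulVec]
  simpa only [mulVec_add, mulVec_sub, mulVec_smul] using congrArg (Cmat a t *ᵥ ·) h

theorem schrodinger_unrotated_system_general
    (q : ℝ → ℝ) (c : ℝ) (hc : 0 < c) (ℓ ε lam : ℝ)
    (u : ℝ → ℝ) (hu : ContDiff ℝ 2 u)
    (heq : ∀ t ∈ Icc (0:ℝ) 1,
      -(1 / c) * deriv (deriv u) t + ε * q t * u t + (2 * ℓ - c) * u t = lam * u t) :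
    ∀ t ∈ Icc (0:ℝ) 1,
      Jr *ᵥ deriv (fun s => Cmat (c - ℓ) s *ᵥ ![u s, deriv u s / c]) t
        + (ε * q t) • (Rmat (c - ℓ) t *ᵥ (Cmat (c - ℓ) t *ᵥ ![u t, deriv u t / c]))
        + ℓ • (((2 : ℝ) • Rmat (c - ℓ) t - 1) *ᵥ
            (Cmat (c - ℓ) t *ᵥ ![u t, deriv u t / c]))
      = lam • (Rmat (c - ℓ) t *ᵥ (Cmat (c - ℓ) t *ᵥ ![u t, deriv u t / c])) := by
  intro t ht
  obtain ⟨hu_diff, -, hu'⟩ := contDiff_succ_iff_deriv.mp (show ContDiff ℝ (1 + 1) u from hu)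
  have hlift : HasDerivAt (fun s => ![u s, deriv u s / c])
      ![deriv u t, deriv (deriv u) t / c] t :=
    hasDerivAt_vec2 (hu_diff t).hasDerivAt
      ((hu'.differentiable one_ne_zero t).hasDerivAt.div_const c)
  rw [(hasDerivAt_Cmat_mulVec (c - ℓ) hlift).deriv]
  refine unrotated_system_of_lifted t ?_
  simp only [Jr_mulVec_vec2, Tmat_mulVec_vec2, Matrix.smul_cons, Matrix.smul_empty,
    cons_add_cons, empty_add_empty, cons_sub_cons, empty_sub_empty, vecCons_inj, smul_eq_mul]
  refine ⟨?_, ?_, trivial⟩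
  · linear_combination heq t ht
  · field_simp [hc.ne']
    ring

/-- **Lift and unrotation of the recentred Schrödinger eigen-equation.**
If `u` is `C²` and solves `−(1/c) u″ + ε q u + (2ℓ − c) u = λ u` on `[0,1]`, then
`y(t) := C_{c−ℓ}(t) (u(t), u′(t)/c)ᵀ` solves the Dirac-type system
`J y′ + ε q R y + ℓ (2R − I) y = λ R y`, where `R(t) := C_{c−ℓ}(t) T C_{c−ℓ}(t)ᵀ`. -/
theorem schrodinger_unrotated_system
    (q : ℝ → ℝ) (hq : Continuous q) (c : ℝ) (hc : 0 < c) (ℓ ε lam : ℝ)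
    (u : ℝ → ℝ) (hu : ContDiff ℝ 2 u)
    (heq : ∀ t ∈ Icc (0:ℝ) 1,
      -(1 / c) * deriv (deriv u) t + ε * q t * u t + (2 * ℓ - c) * u t = lam * u t) :
    ∀ t ∈ Icc (0:ℝ) 1,
      Jr *ᵥ deriv (fun s => Cmat (c - ℓ) s *ᵥ ![u s, deriv u s / c]) t
        + (ε * q t) • (Rmat (c - ℓ) t *ᵥ (Cmat (c - ℓ) t *ᵥ ![u t, deriv u t / c]))
        + ℓ • (((2 : ℝ) • Rmat (c - ℓ) t - 1) *ᵥ
            (Cmat (c - ℓ) t *ᵥ ![u t, deriv u t / c]))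
      = lam • (Rmat (c - ℓ) t *ᵥ (Cmat (c - ℓ) t *ᵥ ![u t, deriv u t / c])) :=
  schrodinger_unrotated_system_general q c hc ℓ ε lam u hu heq
end

section
/- Let μ ≤ λ be real numbers and let θ : [μ, λ] → ℝ be strictly increasing. Then the set {x ∈ [μ, λ] : θ(x) ∈ π·ℤ} is finite and its cardinality is at most (θ(λ) − θ(μ))/π + 1. -/
open Set

/-!
The map `θ` is injective on the hitting set `S`, and sends it into the multiples `n π` with
`θ μ ≤ n π ≤ θ λ`, i.e. with `n ∈ [⌈θ μ / π⌉, ⌊θ λ / π⌋]`; there are at most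
`(θ λ - θ μ) / π + 1` such integers.
-/

section

variable {K : Type*} [Field K] [LinearOrder K] [IsStrictOrderedRing K] [FloorRing K]

theorem Int.card_Icc_ceil_floor_le {a b : K} (hab : a ≤ b) :
    ((Finset.Icc ⌈a⌉ ⌊b⌋).card : K) ≤ b - a + 1 := by
  rw [Int.card_Icc]
  rcases le_or_gt (⌊b⌋ + 1 - ⌈a⌉) 0 with h | h
  · rw [Int.toNat_of_nonpos h, Nat.cast_zero]
    linarith
  · rw [← Int.cast_natCast, Int.toNat_of_nonneg h.le]
    push_cast
    linarith [Int.floor_le b, Int.le_ceil a]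

theorem Int.mem_Icc_ceil_div_floor_div {c a b : K} (hc : 0 < c) {n : ℤ} (h : n * c ∈ Icc a b) :
    n ∈ Finset.Icc ⌈a / c⌉ ⌊b / c⌋ := by
  rw [Finset.mem_Icc, Int.ceil_le, Int.le_floor, div_le_iff₀ hc, le_div_iff₀ hc]
  exact h

theorem MonotoneOn.image_hitting_zmultiples_subset {α : Type*} [Preorder α] {μ lam : α}
    {c : K} {θ : α → K} (hθ : MonotoneOn θ (Icc μ lam)) (hc : 0 < c) :
    θ '' {x ∈ Icc μ lam | ∃ n : ℤ, θ x = n * c} ⊆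
      (fun n : ℤ => n * c) '' Finset.Icc ⌈θ μ / c⌉ ⌊θ lam / c⌋ := by
  rintro _ ⟨x, ⟨hx, n, hn⟩, rfl⟩
  have hμlam : μ ≤ lam := hx.1.trans hx.2
  refine ⟨n, Int.mem_Icc_ceil_div_floor_div hc ?_, hn.symm⟩
  rw [← hn]
  exact ⟨hθ (left_mem_Icc.2 hμlam) hx hx.1, hθ hx (right_mem_Icc.2 hμlam) hx.2⟩

end

/-- **Counting bound for hitting points of `πℤ` by a strictly increasing function.**
If `θ : [μ,λ] → ℝ` is strictly increasing, then the set of points of `[μ,λ]` at which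
`θ` takes a value in `πℤ` is finite, with cardinality at most `(θ(λ) − θ(μ))/π + 1`. -/
theorem card_hitting_pi_multiples_le
    (μ lam : ℝ) (hle : μ ≤ lam) (θ : ℝ → ℝ) (hθ : StrictMonoOn θ (Icc μ lam)) :
    {x ∈ Icc μ lam | ∃ n : ℤ, θ x = n * Real.pi}.Finite ∧
    ({x ∈ Icc μ lam | ∃ n : ℤ, θ x = n * Real.pi}.ncard : ℝ)
      ≤ (θ lam - θ μ) / Real.pi + 1 := by
  set S := {x ∈ Icc μ lam | ∃ n : ℤ, θ x = n * Real.pi}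
  set N := Finset.Icc ⌈θ μ / Real.pi⌉ ⌊θ lam / Real.pi⌋
  have hsub : θ '' S ⊆ (fun n : ℤ => n * Real.pi) '' N :=
    hθ.monotoneOn.image_hitting_zmultiples_subset Real.pi_pos
  have hinj : InjOn θ S := hθ.injOn.mono (sep_subset _ _)
  have hfin : (θ '' S).Finite := (N.finite_toSet.image _).subset hsub
  refine ⟨hfin.of_finite_image hinj, ?_⟩
  have hθle : θ μ / Real.pi ≤ θ lam / Real.pi :=
    div_le_div_of_nonneg_right (hθ.monotoneOn (left_mem_Icc.2 hle) (right_mem_Icc.2 hle) hle)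
      Real.pi_pos.le
  calc (S.ncard : ℝ) = (θ '' S).ncard := by rw [hinj.ncard_image]
    _ ≤ N.card := by
      exact_mod_cast (ncard_le_ncard hsub (N.finite_toSet.image _)).trans
        ((ncard_image_le N.finite_toSet).trans_eq (ncard_coe_finset N))
    _ ≤ θ lam / Real.pi - θ μ / Real.pi + 1 := Int.card_Icc_ceil_floor_le hθle
    _ = (θ lam - θ μ) / Real.pi + 1 := by rw [sub_div]
end

section
/- Let (Ω, 𝓕, P) be a probability space and let B = (B_t)_{t∈[0,1]} be a standard Brownian motion on it: B₀ = 0 almost surely, B has almost surely continuous sample paths, B has independent increments, and for 0 ≤ s ≤ t ≤ 1 the increment B_t − B_s is Gaussian with mean 0 and variance t − s. Fix τ > 0 and u ∈ [0,1], and define f^u(t) := (u − |u − t|)/2 and Y(t) := t·τ/8 + (√τ/(2√2))·B_t for t ∈ [0,1]. Then for every bounded Borel-measurable functional G on the space C([0,1], ℝ) of continuous real-valued functions on [0,1] (with the uniform norm), E[ G(Y) · exp( (u − 1)·τ/4 + (√τ/√2)·(B_u − B_1) ) ] = E[ G( (τ/4)·f^u + (√τ/(2√2))·B ) ]. -/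
/-!
Refine the observation times to a grid containing `u` and `1`. The density factorises over
the Brownian increments, and on an increment of length `Δ` after `u` it tilts `N(0, Δ)` into
`N(-θΔ, Δ)`, where `θ = √τ/√2`. Hence under the tilted measure `B` has the finite-dimensional
laws of `B - θ (t - u)₊`, and since a finite measure on `C([0,1], ℝ)` is determined by its
finite-dimensional marginals, the tilted law of `Y` is the law of
`t τ/8 - (τ/4) (t - u)₊ + (√τ/(2√2)) B = (τ/4) f^u + (√τ/(2√2)) B`.
-/

open Set MeasureTheory ProbabilityTheory
open scoped Classical

/-- Evaluate a functional `G` on the space `C([0,1], ℝ)` at the restriction of a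
path `p : ℝ → ℝ` to `[0,1]`, returning `0` if this restriction is not continuous. -/
noncomputable def pathEval (G : C(Set.Icc (0:ℝ) 1, ℝ) → ℝ) (p : ℝ → ℝ) : ℝ :=
  if h : Continuous (fun t : Set.Icc (0:ℝ) 1 => p t) then G ⟨_, h⟩ else 0

open scoped ENNReal NNReal

theorem gaussianReal_withDensity_exp (v : ℝ≥0) (a : ℝ) :
    (gaussianReal 0 v).withDensity (fun x => ENNReal.ofReal (Real.exp (a * x - a ^ 2 * v / 2)))
      = gaussianReal (a * v) v := by
  by_cases hv : v = 0
  · subst hv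
    simp [dirac_withDensity]
  rw [gaussianReal_of_var_ne_zero _ hv, gaussianReal_of_var_ne_zero _ hv, ← withDensity_mul _
    (measurable_gaussianPDF _ _) (by fun_prop)]
  congr 1
  funext x
  simp only [Pi.mul_apply, gaussianPDF, ← ENNReal.ofReal_mul (gaussianPDFReal_nonneg 0 v x)]
  congr 1
  simp only [gaussianPDFReal, mul_assoc, ← Real.exp_add]
  congr 2
  have : (v : ℝ) ≠ 0 := by exact_mod_cast hv
  field_simp
  ring

theorem ProbabilityTheory.iIndepFun.map_withDensity_exp_sum_eq_map_add {Ω ι : Type*}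
    [MeasurableSpace Ω] {P : Measure Ω} [Fintype ι] {X : ι → Ω → ℝ} (hX : iIndepFun X P)
    (hXm : ∀ i, Measurable (X i))
    {v : ι → ℝ≥0} (hXlaw : ∀ i, P.map (X i) = gaussianReal 0 (v i)) (a : ι → ℝ) :
    (P.withDensity fun ω => ENNReal.ofReal (Real.exp (∑ i, (a i * X i ω - a i ^ 2 * v i / 2)))).map
        (fun ω i => X i ω)
      = P.map (fun ω i => X i ω + a i * v i) := by
  have := hX.isProbabilityMeasure
  set φ : ι → ℝ → ℝ≥0∞ := fun i x => ENNReal.ofReal (Real.exp (a i * x - a i ^ 2 * v i / 2))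
  have hφ : ∀ i, Measurable (φ i) := fun i => by fun_prop
  have hV : Measurable fun ω i => X i ω := measurable_pi_lambda _ hXm
  have hshift : P.map (fun ω i => X i ω + a i * v i)
      = Measure.pi fun i => gaussianReal (a i * v i) (v i) := by
    have hpres := measurePreserving_pi (fun i => gaussianReal 0 (v i))
      (fun i => gaussianReal (a i * v i) (v i)) (f := fun i x => x + a i * v i)
      fun i => ⟨by fun_prop, by rw [gaussianReal_map_add_const, zero_add]⟩
    rw [← hpres.map_eq, ← funext hXlaw, ← hX.map_fun_eq_pi_map fun i => (hXm i).aemeasurable,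
      Measure.map_map (by fun_prop) hV]
    rfl
  rw [hshift]
  refine (Measure.pi_eq fun s hs => ?_).symm
  have hbox : MeasurableSet ((fun ω i => X i ω) ⁻¹' univ.pi s) := hV (.univ_pi hs)
  rw [Measure.map_apply hV (.univ_pi hs), withDensity_apply _ hbox, ← lintegral_indicator hbox]
  have hprod : ∀ ω, ((fun ω i => X i ω) ⁻¹' univ.pi s).indicator
      (fun ω => ENNReal.ofReal (Real.exp (∑ i, (a i * X i ω - a i ^ 2 * v i / 2)))) ω
      = ∏ i, (s i).indicator (φ i) (X i ω) := by
    intro ω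
    simp only [Set.indicator_apply, Set.mem_preimage, Set.mem_univ_pi, Finset.prod_ite_zero,
      Finset.mem_univ, true_implies, φ, Real.exp_sum]
    rw [ENNReal.ofReal_prod_of_nonneg fun i _ => (Real.exp_pos _).le]
  simp only [hprod]
  refine (lintegral_prod_eq_prod_lintegral_of_indepFun Finset.univ _
    (hX.comp _ fun i => (hφ i).indicator (hs i))
    fun i => ((hφ i).indicator (hs i)).comp (hXm i)).trans ?_
  refine Finset.prod_congr rfl fun i _ => ?_
  rw [← gaussianReal_withDensity_exp, withDensity_apply _ (hs i), ← lintegral_indicator (hs i),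
    ← hXlaw i, lintegral_map ((hφ i).indicator (hs i)) (hXm i)]
  rfl

theorem Fin.sum_succ_le_sub {M : Type*} [AddCommGroup M] {m : ℕ} (g : Fin (m + 1) → M)
    (p : Fin (m + 1)) :
    ∑ r : Fin m with r.succ ≤ p, (g r.succ - g r.castSucc) = g p - g 0 := by
  induction p using Fin.induction with
  | zero => simp [Fin.succ_ne_zero]
  | succ q ih =>
    have hsplit : ∀ r : Fin m, (r.succ ≤ q.succ) ↔ (r.succ ≤ q.castSucc ∨ r = q) := fun r => by
      simp only [Fin.succ_le_succ_iff, Fin.succ_le_castSucc_iff]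
      exact le_iff_lt_or_eq
    rw [Finset.filter_congr fun r _ => hsplit r, Finset.filter_or, Finset.sum_union, ih,
      Finset.filter_eq', if_pos (Finset.mem_univ q), Finset.sum_singleton]
    · abel
    · simpa [Finset.disjoint_left] using fun r hr => hr.ne

theorem Fin.sum_succ_le_ite_mul_sub {R : Type*} [CommRing R] {m : ℕ} (g : Fin (m + 1) → R)
    (c : R) (p q : Fin (m + 1)) :
    ∑ r : Fin m with r.succ ≤ p, (if r.succ ≤ q then 0 else c) * (g r.succ - g r.castSucc)
      = c * (g p - g (min p q)) := by
  have h := Finset.sum_filter_add_sum_filter_not (Finset.univ.filter fun r : Fin m => r.succ ≤ p)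
    (fun r => r.succ ≤ q) (fun r => g r.succ - g r.castSucc)
  simp only [Finset.filter_filter, ← le_min_iff, Fin.sum_succ_le_sub] at h
  simp only [ite_mul, zero_mul]
  rw [Finset.sum_ite, Finset.sum_const_zero, zero_add, Finset.filter_filter, ← Finset.mul_sum,
    ← sub_eq_iff_eq_add'.mpr h.symm]
  ring

theorem Finset.exists_monotone_fin_range_eq {α : Type*} [LinearOrder α] {S : Finset α}
    (hS : S.Nonempty) : ∃ (m : ℕ) (s : Fin (m + 1) → α), Monotone s ∧ Set.range s = S := by
  have hcard : S.card = S.card - 1 + 1 := (Nat.sub_add_cancel hS.card_pos).symm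
  exact ⟨_, _, (S.orderEmbOfFin hcard).monotone, S.range_orderEmbOfFin hcard⟩

namespace ContinuousMap

universe u

variable {X : Type u} [MetricSpace X] [CompactSpace X]
  [MeasurableSpace C(X, ℝ)] [BorelSpace C(X, ℝ)]

theorem measurableEmbedding_restrict_of_dense {D : Set X} (hDc : D.Countable) (hD : Dense D) :
    MeasurableEmbedding fun (w : C(X, ℝ)) (x : D) => w x := by
  have := hDc.to_subtype
  refine Continuous.measurableEmbedding (continuous_pi fun x => continuous_eval_const _)
    fun w w' h => DFunLike.coe_injective ?_
  exact Continuous.ext_on hD w.continuous w'.continuous fun x hx => congrFun h ⟨x, hx⟩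

theorem measurable_of_forall_eval {Ω : Type*} [MeasurableSpace Ω] {F : Ω → C(X, ℝ)}
    (hF : ∀ x, Measurable fun ω => F ω x) : Measurable F := by
  obtain ⟨D, hDc, hD⟩ := TopologicalSpace.exists_countable_dense X
  exact (measurableEmbedding_restrict_of_dense hDc hD).measurable_comp_iff.mp
    (measurable_pi_lambda _ fun x => hF x)

theorem measure_ext_of_map_eval {μ ν : Measure C(X, ℝ)} [IsFiniteMeasure μ]
    (h : ∀ (ι : Type u) [Fintype ι] (t : ι → X),
      μ.map (fun w i => w (t i)) = ν.map (fun w i => w (t i))) :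
    μ = ν := by
  obtain ⟨D, hDc, hD⟩ := TopologicalSpace.exists_countable_dense X
  have he := measurableEmbedding_restrict_of_dense hDc hD
  have hlim : ∀ ρ : Measure C(X, ℝ), IsProjectiveLimit (ρ.map fun w (x : D) => w x)
      fun J => ρ.map fun w (j : J) => w j := fun ρ J => by
    rw [Measure.map_map (Finset.measurable_restrict J) he.measurable]
    rfl
  have hmap : (μ.map fun w (x : D) => w x) = ν.map fun w (x : D) => w x := by
    refine (hlim μ).unique ?_
    convert hlim ν using 2 with J
    exact h J fun j => j.1
  rw [← he.comap_map μ, hmap, he.comap_map]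

end ContinuousMap

theorem exists_measurable_continuousMap_ae_eq {X Ω : Type*} [MetricSpace X] [CompactSpace X]
    [MeasurableSpace C(X, ℝ)] [BorelSpace C(X, ℝ)] [MeasurableSpace Ω] {P : Measure Ω}
    {B : X → Ω → ℝ} (hBm : ∀ x, Measurable (B x)) (hBc : ∀ᵐ ω ∂P, Continuous fun x => B x ω) :
    ∃ W : Ω → C(X, ℝ), Measurable W ∧ ∀ᵐ ω ∂P, ∀ x, W ω x = B x ω := by
  set N := toMeasurable P {ω | ¬Continuous fun x => B x ω}
  have hN : ∀ ω ∉ N, Continuous fun x => B x ω := fun ω hω =>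
    not_not.mp fun h => hω (subset_toMeasurable _ _ h)
  refine ⟨fun ω => if h : ω ∈ N then 0 else ⟨_, hN ω h⟩,
    ContinuousMap.measurable_of_forall_eval fun x => ?_, ?_⟩
  · have : (fun ω => (if h : ω ∈ N then 0 else ⟨_, hN ω h⟩ : C(X, ℝ)) x)
        = fun ω => if ω ∈ N then 0 else B x ω := by
      funext ω
      split_ifs <;> rfl
    rw [this]
    exact Measurable.ite (measurableSet_toMeasurable _ _) measurable_const (hBm x)
  · have hN0 : P N = 0 := by rw [measure_toMeasurable]; exact ae_iff.mp hBc
    filter_upwards [measure_eq_zero_iff_ae_notMem.mp hN0] with ω hω x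
    simp [hω]

structure HasIndepGaussianIncrements {Ω : Type*} [MeasurableSpace Ω] (P : Measure Ω)
    (B : ℝ → Ω → ℝ) : Prop where
  measurable : ∀ t ∈ Icc (0:ℝ) 1, Measurable (B t)
  iIndepFun_increments : ∀ (n : ℕ) (t : Fin (n+1) → ℝ), Monotone t →
    (∀ i, t i ∈ Icc (0:ℝ) 1) →
    iIndepFun (m := fun _ : Fin n => (inferInstance : MeasurableSpace ℝ))
      (fun i ω => B (t i.succ) ω - B (t i.castSucc) ω) P
  map_increment : ∀ s t : ℝ, 0 ≤ s → s ≤ t → t ≤ 1 →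
    P.map (fun ω => B t ω - B s ω) = gaussianReal 0 (Real.toNNReal (t - s))

def ramp (u : ℝ) : C(Icc (0:ℝ) 1, ℝ) := ⟨fun t => max ((t : ℝ) - u) 0, by fun_prop⟩

namespace HasIndepGaussianIncrements

variable {Ω : Type*} [MeasurableSpace Ω] {P : Measure Ω} {B : ℝ → Ω → ℝ}

theorem map_withDensity_exp_increments_of_grid (hB : HasIndepGaussianIncrements P B)
    {m : ℕ} {s : Fin (m + 1) → ℝ} (hs_mono : Monotone s) (hs : ∀ p, s p ∈ Icc (0:ℝ) 1)
    (hs1 : s (Fin.last m) = 1) (θ : ℝ) (ju : Fin (m + 1)) :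
    (P.withDensity fun ω =>
        ENNReal.ofReal (Real.exp (θ * (B (s ju) ω - B 1 ω) - θ ^ 2 * (1 - s ju) / 2))).map
        (fun ω (r : Fin m) => B (s r.succ) ω - B (s r.castSucc) ω)
      = P.map fun ω (r : Fin m) => B (s r.succ) ω - B (s r.castSucc) ω
          + (if r.succ ≤ ju then 0 else -θ) * (s r.succ - s r.castSucc) := by
  have hv : ∀ r : Fin m, ((s r.succ - s r.castSucc).toNNReal : ℝ) = s r.succ - s r.castSucc :=
    fun r => Real.coe_toNNReal _ (sub_nonneg.2 (hs_mono r.castSucc_le_succ))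
  have hCM := (hB.iIndepFun_increments m s hs_mono hs).map_withDensity_exp_sum_eq_map_add
    (fun r => (hB.measurable _ (hs _)).sub (hB.measurable _ (hs _)))
    (fun r => hB.map_increment _ _ (hs _).1 (hs_mono r.castSucc_le_succ) (hs _).2)
    (fun r => if r.succ ≤ ju then 0 else -θ)
  simp only [hv] at hCM
  have hρ : ∀ ω, θ * (B (s ju) ω - B 1 ω) - θ ^ 2 * (1 - s ju) / 2
      = ∑ r : Fin m, ((if r.succ ≤ ju then 0 else -θ) * (B (s r.succ) ω - B (s r.castSucc) ω)
        - (if r.succ ≤ ju then 0 else -θ) ^ 2 * (s r.succ - s r.castSucc) / 2) := by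
    intro ω
    have h1 := Fin.sum_succ_le_ite_mul_sub (fun p => B (s p) ω) (-θ) (Fin.last m) ju
    have h2 := Fin.sum_succ_le_ite_mul_sub s (θ ^ 2 / 2) (Fin.last m) ju
    simp only [Fin.le_last, Finset.filter_true, min_eq_right, hs1] at h1 h2
    have hsq : ∀ r : Fin m, (if r.succ ≤ ju then 0 else -θ) ^ 2 * (s r.succ - s r.castSucc) / 2
        = (if r.succ ≤ ju then 0 else θ ^ 2 / 2) * (s r.succ - s r.castSucc) := fun r => by
      split_ifs <;> ring
    rw [Finset.sum_sub_distrib, Finset.sum_congr rfl fun r _ => hsq r, h1, h2]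
    ring
  simp_rw [hρ]
  exact hCM

theorem map_withDensity_exp_eq_map_sub_ramp_of_grid (hB : HasIndepGaussianIncrements P B)
    (hB0 : ∀ᵐ ω ∂P, B 0 ω = 0)
    {m : ℕ} {s : Fin (m + 1) → ℝ} (hs_mono : Monotone s) (hs : ∀ p, s p ∈ Icc (0:ℝ) 1)
    (hs0 : s 0 = 0) (hs1 : s (Fin.last m) = 1) (θ : ℝ) (ju : Fin (m + 1))
    {ι : Type*} [Fintype ι] (σ : ι → Fin (m + 1)) :
    (P.withDensity fun ω =>
        ENNReal.ofReal (Real.exp (θ * (B (s ju) ω - B 1 ω) - θ ^ 2 * (1 - s ju) / 2))).map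
        (fun ω i => B (s (σ i)) ω)
      = P.map (fun ω i => B (s (σ i)) ω - θ * max (s (σ i) - s ju) 0) := by
  have hV : Measurable fun ω (r : Fin m) => B (s r.succ) ω - B (s r.castSucc) ω :=
    measurable_pi_lambda _ fun r => (hB.measurable _ (hs _)).sub (hB.measurable _ (hs _))
  set L : (Fin m → ℝ) → ι → ℝ := fun x i => ∑ r with r.succ ≤ σ i, x r
  have hL : Measurable L :=
    measurable_pi_lambda _ fun i => Finset.measurable_sum _ fun r _ => measurable_pi_apply r
  have hpath : ∀ᵐ ω ∂P, (fun i => B (s (σ i)) ω)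
      = L (fun r => B (s r.succ) ω - B (s r.castSucc) ω) := by
    filter_upwards [hB0] with ω hω
    funext i
    simp only [L]
    rw [Fin.sum_succ_le_sub (fun p => B (s p) ω), hs0, hω, sub_zero]
  have hdrift : ∀ i, L (fun r => (if r.succ ≤ ju then 0 else -θ) * (s r.succ - s r.castSucc)) i
      = -(θ * max (s (σ i) - s ju) 0) := by
    intro i
    have hramp : s (σ i) - min (s (σ i)) (s ju) = max (s (σ i) - s ju) 0 := by
      rcases le_total (s (σ i)) (s ju) with h | h <;> simp [h]
    simp only [L]
    rw [Fin.sum_succ_le_ite_mul_sub, hs_mono.map_min, hramp]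
    ring
  calc _ = (P.withDensity _).map (L ∘ fun ω r => B (s r.succ) ω - B (s r.castSucc) ω) :=
        Measure.map_congr ((withDensity_absolutelyContinuous P _).ae_le hpath)
    _ = ((P.withDensity _).map fun ω r => B (s r.succ) ω - B (s r.castSucc) ω).map L :=
        (Measure.map_map hL hV).symm
    _ = (P.map fun ω (r : Fin m) => B (s r.succ) ω - B (s r.castSucc) ω
          + (if r.succ ≤ ju then 0 else -θ) * (s r.succ - s r.castSucc)).map L := by
        rw [hB.map_withDensity_exp_increments_of_grid hs_mono hs hs1]
    _ = _ := by
        have hV' : Measurable fun ω (r : Fin m) => B (s r.succ) ω - B (s r.castSucc) ω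
            + (if r.succ ≤ ju then 0 else -θ) * (s r.succ - s r.castSucc) := hV.add_const _
        rw [Measure.map_map hL hV']
        refine Measure.map_congr ?_
        filter_upwards [hpath] with ω hω
        funext i
        have hd := hdrift i
        simp only [L, Function.comp_apply, Finset.sum_add_distrib] at hd hω ⊢
        rw [congrFun hω i, hd]
        ring

theorem map_withDensity_exp_eq_map_sub_ramp (hB : HasIndepGaussianIncrements P B)
    (hB0 : ∀ᵐ ω ∂P, B 0 ω = 0)
    (θ : ℝ) {u : ℝ} (hu : u ∈ Icc (0:ℝ) 1) {ι : Type*} [Fintype ι] (t : ι → ℝ)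
    (ht : ∀ i, t i ∈ Icc (0:ℝ) 1) :
    (P.withDensity fun ω =>
        ENNReal.ofReal (Real.exp (θ * (B u ω - B 1 ω) - θ ^ 2 * (1 - u) / 2))).map
        (fun ω i => B (t i) ω)
      = P.map (fun ω i => B (t i) ω - θ * max (t i - u) 0) := by
  set S : Finset ℝ := insert 0 (insert 1 (insert u (Finset.univ.image t)))
  have hS : ↑S ⊆ Icc (0 : ℝ) 1 := by
    simp only [S, Finset.coe_insert, Finset.coe_image, Finset.coe_univ, Set.image_univ,
      Set.insert_subset_iff, Set.range_subset_iff]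
    exact ⟨⟨le_rfl, zero_le_one⟩, ⟨zero_le_one, le_rfl⟩, hu, ht⟩
  obtain ⟨m, s, hs_mono, hs_range⟩ := S.exists_monotone_fin_range_eq ⟨0, by simp [S]⟩
  have hs : ∀ p, s p ∈ Icc (0 : ℝ) 1 := fun p => hS (hs_range ▸ Set.mem_range_self p)
  have hmem : ∀ x ∈ S, x ∈ Set.range s := fun x hx => hs_range ▸ hx
  obtain ⟨j₀, hj₀⟩ := hmem 0 (by simp [S])
  obtain ⟨j₁, hj₁⟩ := hmem 1 (by simp [S])
  obtain ⟨ju, rfl⟩ := hmem u (by simp [S])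
  choose σ hσ using fun i => hmem (t i) (by simp [S])
  simpa only [hσ] using hB.map_withDensity_exp_eq_map_sub_ramp_of_grid hB0 hs_mono hs
    (le_antisymm (hj₀ ▸ hs_mono (Fin.zero_le j₀)) (hs 0).1)
    (le_antisymm (hs _).2 (hj₁ ▸ hs_mono (Fin.le_last j₁))) θ ju σ

theorem map_withDensity_exp_path_eq_map_sub_ramp [IsProbabilityMeasure P]
    (hB : HasIndepGaussianIncrements P B) (hB0 : ∀ᵐ ω ∂P, B 0 ω = 0)
    (θ : ℝ) {u : ℝ} (hu : u ∈ Icc (0:ℝ) 1)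
    [MeasurableSpace C(Icc (0:ℝ) 1, ℝ)] [BorelSpace C(Icc (0:ℝ) 1, ℝ)]
    {W : Ω → C(Icc (0:ℝ) 1, ℝ)} (hWm : Measurable W) (hW : ∀ᵐ ω ∂P, ∀ t, W ω t = B t ω) :
    (P.withDensity fun ω =>
        ENNReal.ofReal (Real.exp (θ * (B u ω - B 1 ω) - θ ^ 2 * (1 - u) / 2))).map W
      = P.map fun ω => W ω - θ • ramp u := by
  set ρ : Ω → ℝ≥0∞ := fun ω =>
    ENNReal.ofReal (Real.exp (θ * (B u ω - B 1 ω) - θ ^ 2 * (1 - u) / 2))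
  have hWρ : ∀ᵐ ω ∂P.withDensity ρ, ∀ t, W ω t = B t ω :=
    (withDensity_absolutelyContinuous P ρ).ae_le hW
  refine (ContinuousMap.measure_ext_of_map_eval fun ι _ t => ?_).symm
  have hev : Measurable fun (w : C(Icc (0:ℝ) 1, ℝ)) i => w (t i) :=
    measurable_pi_lambda _ fun i => (continuous_eval_const (t i)).measurable
  have hWsub : Measurable fun ω => W ω - θ • ramp u := (continuous_sub_right _).measurable.comp hWm
  rw [Measure.map_map hev hWsub, Measure.map_map hev hWm]
  calc _ = P.map (fun ω i => B (t i) ω - θ * max ((t i : ℝ) - u) 0) :=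
        Measure.map_congr (hW.mono fun ω hω => funext fun i => by simp [ramp, hω])
    _ = _ := (hB.map_withDensity_exp_eq_map_sub_ramp hB0 θ hu (fun i => (t i : ℝ))
        fun i => (t i).2).symm
    _ = _ := Measure.map_congr (hWρ.mono fun ω hω => funext fun i => (hω (t i)).symm)

theorem map_withDensity_exp_add_smul_path_eq [IsProbabilityMeasure P]
    (hB : HasIndepGaussianIncrements P B) (hB0 : ∀ᵐ ω ∂P, B 0 ω = 0)
    (θ : ℝ) {u : ℝ} (hu : u ∈ Icc (0:ℝ) 1)
    [MeasurableSpace C(Icc (0:ℝ) 1, ℝ)] [BorelSpace C(Icc (0:ℝ) 1, ℝ)]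
    {W : Ω → C(Icc (0:ℝ) 1, ℝ)} (hWm : Measurable W) (hW : ∀ᵐ ω ∂P, ∀ t, W ω t = B t ω)
    (D : C(Icc (0:ℝ) 1, ℝ)) (c : ℝ) :
    (P.withDensity fun ω =>
        ENNReal.ofReal (Real.exp (θ * (B u ω - B 1 ω) - θ ^ 2 * (1 - u) / 2))).map
        (fun ω => D + c • W ω)
      = P.map fun ω => D - (c * θ) • ramp u + c • W ω := by
  have hA : Measurable fun w : C(Icc (0:ℝ) 1, ℝ) => D + c • w :=
    (continuous_const.add (continuous_const_smul c)).measurable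
  rw [show (fun ω => D + c • W ω) = (fun w => D + c • w) ∘ W from rfl,
    ← Measure.map_map hA hWm, hB.map_withDensity_exp_path_eq_map_sub_ramp hB0 θ hu hWm hW,
    Measure.map_map hA (by fun_prop)]
  congr 1
  funext ω
  simp only [Function.comp_apply, smul_sub, smul_smul]
  abel

end HasIndepGaussianIncrements

theorem pathEval_eq_of_forall_eq {G : C(Icc (0:ℝ) 1, ℝ) → ℝ} {p : ℝ → ℝ}
    {w : C(Icc (0:ℝ) 1, ℝ)} (h : ∀ t : Icc (0:ℝ) 1, p t = w t) : pathEval G p = G w := by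
  have hp : (fun t : Icc (0:ℝ) 1 => p t) = ⇑w := funext h
  rw [pathEval, dif_pos (hp ▸ w.continuous)]
  exact congrArg G (DFunLike.coe_injective hp)

theorem integral_pathEval_eq_integral_map {Ω : Type*} [MeasurableSpace Ω] {P : Measure Ω}
    [MeasurableSpace C(Icc (0:ℝ) 1, ℝ)] {G : C(Icc (0:ℝ) 1, ℝ) → ℝ} (hG : Measurable G)
    {F : Ω → C(Icc (0:ℝ) 1, ℝ)} (hF : Measurable F) {p : Ω → ℝ → ℝ}
    (hp : ∀ᵐ ω ∂P, ∀ t : Icc (0:ℝ) 1, p ω t = F ω t) :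
    ∫ ω, pathEval G (p ω) ∂P = ∫ w, G w ∂P.map F := by
  rw [integral_map hF.aemeasurable hG.aestronglyMeasurable]
  exact integral_congr_ae (hp.mono fun ω h => pathEval_eq_of_forall_eq h)

theorem integral_mul_exp_eq_integral_withDensity {Ω : Type*} [MeasurableSpace Ω]
    {P : Measure Ω} {f : Ω → ℝ} (hf : Measurable f) (g : Ω → ℝ) :
    ∫ ω, g ω * Real.exp (f ω) ∂P
      = ∫ ω, g ω ∂P.withDensity fun ω => ENNReal.ofReal (Real.exp (f ω)) := by
  rw [integral_withDensity_eq_integral_toReal_smul (by fun_prop)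
    (ae_of_all _ fun _ => ENNReal.ofReal_lt_top)]
  simp only [ENNReal.toReal_ofReal (Real.exp_pos _).le, smul_eq_mul, mul_comm]

theorem sub_abs_sub_div_two (u t : ℝ) : (u - |u - t|) / 2 = t / 2 - max (t - u) 0 := by
  rcases le_total t u with h | h
  · rw [abs_of_nonneg (sub_nonneg.2 h), max_eq_right (sub_nonpos.2 h)]
    ring
  · rw [abs_of_nonpos (sub_nonpos.2 h), max_eq_left (sub_nonneg.2 h)]
    ring

theorem girsanov_tent_drift_general
    {Ω : Type*} [MeasurableSpace Ω] (P : Measure Ω) [IsProbabilityMeasure P]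
    (B : ℝ → Ω → ℝ)
    (hBmeas : ∀ t ∈ Icc (0:ℝ) 1, Measurable (B t))
    (hB0 : ∀ᵐ ω ∂P, B 0 ω = 0)
    (hBcont : ∀ᵐ ω ∂P, ContinuousOn (fun t => B t ω) (Icc (0:ℝ) 1))
    (hBindep : ∀ (n : ℕ) (t : Fin (n+1) → ℝ), Monotone t →
      (∀ i, t i ∈ Icc (0:ℝ) 1) →
      iIndepFun (m := fun _ : Fin n => (inferInstance : MeasurableSpace ℝ))
        (fun i ω => B (t i.succ) ω - B (t i.castSucc) ω) P)
    (hBgauss : ∀ s t : ℝ, 0 ≤ s → s ≤ t → t ≤ 1 →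
      P.map (fun ω => B t ω - B s ω) = gaussianReal 0 (Real.toNNReal (t - s)))
    (τ : ℝ) (hτ : 0 < τ) (u : ℝ) (hu : u ∈ Icc (0:ℝ) 1)
    (G : C(Set.Icc (0:ℝ) 1, ℝ) → ℝ)
    (hGmeas : @Measurable _ _ (borel C(Set.Icc (0:ℝ) 1, ℝ)) _ G) :
    ∫ ω, pathEval G (fun t => t * τ / 8 + (Real.sqrt τ / (2 * Real.sqrt 2)) * B t ω)
        * Real.exp ((u - 1) * τ / 4 + (Real.sqrt τ / Real.sqrt 2) * (B u ω - B 1 ω)) ∂P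
      = ∫ ω, pathEval G
          (fun t => (τ / 4) * ((u - |u - t|) / 2)
            + (Real.sqrt τ / (2 * Real.sqrt 2)) * B t ω) ∂P := by
  have hB : HasIndepGaussianIncrements P B := ⟨hBmeas, hBindep, hBgauss⟩
  let : MeasurableSpace C(Icc (0:ℝ) 1, ℝ) := borel _
  have : BorelSpace C(Icc (0:ℝ) 1, ℝ) := ⟨rfl⟩
  set θ := Real.sqrt τ / Real.sqrt 2
  set c := Real.sqrt τ / (2 * Real.sqrt 2)
  have hθ : θ ^ 2 = τ / 2 := by rw [div_pow, Real.sq_sqrt hτ.le, Real.sq_sqrt zero_le_two]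
  have hcθ : c * θ = τ / 4 := by
    rw [div_mul_div_comm, Real.mul_self_sqrt hτ.le, mul_assoc, Real.mul_self_sqrt zero_le_two]
    ring
  obtain ⟨W, hWm, hW⟩ := exists_measurable_continuousMap_ae_eq
    (fun t : Icc (0:ℝ) 1 => hBmeas t t.2) (hBcont.mono fun ω h => h.domRestrict)
  set D₁ : C(Icc (0:ℝ) 1, ℝ) := ⟨fun t => (t : ℝ) * τ / 8, by fun_prop⟩
  set D₂ : C(Icc (0:ℝ) 1, ℝ) := ⟨fun t => τ / 4 * ((u - |u - t|) / 2), by fun_prop⟩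
  have hD : D₁ - (c * θ) • ramp u = D₂ := by
    ext t
    simp [D₁, D₂, ramp, sub_abs_sub_div_two]
    linear_combination (-max ((t : ℝ) - u) 0) * hcθ
  have hAW : ∀ D : C(Icc (0:ℝ) 1, ℝ), Measurable fun ω => D + c • W ω := fun D =>
    (continuous_const.add (continuous_const_smul c)).measurable.comp hWm
  have hexp : ∀ ω, (u - 1) * τ / 4 + θ * (B u ω - B 1 ω)
      = θ * (B u ω - B 1 ω) - θ ^ 2 * (1 - u) / 2 := fun ω => by rw [hθ]; ring
  have hBu := hBmeas u hu
  have hB1 := hBmeas 1 ⟨zero_le_one, le_rfl⟩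
  simp_rw [hexp]
  rw [integral_mul_exp_eq_integral_withDensity (by fun_prop),
    integral_pathEval_eq_integral_map hGmeas (hAW D₁)
      ((withDensity_absolutelyContinuous _ _).ae_le (hW.mono fun ω hω t => by simp [D₁, hω])),
    hB.map_withDensity_exp_add_smul_path_eq hB0 θ hu hWm hW, hD,
    integral_pathEval_eq_integral_map hGmeas (hAW D₂)
      (hW.mono fun ω hω t => by simp [D₂, hω])]

/-- **Girsanov change of measure producing the tent-shaped drift (Lemma 2.7).**
Let `B` be a standard Brownian motion on `[0,1]` on a probability space `(Ω, 𝓕, P)`.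
Fix `τ > 0`, `u ∈ [0,1]`, set `f^u(t) = (u − |u−t|)/2` and
`Y(t) = t τ/8 + (√τ/(2√2)) B_t`. Then for every bounded Borel functional `G` on
`C([0,1], ℝ)` (with the uniform norm),
`E[G(Y) exp((u−1)τ/4 + (√τ/√2)(B_u − B_1))] = E[G((τ/4) f^u + (√τ/(2√2)) B)]`. -/
theorem girsanov_tent_drift
    {Ω : Type*} [MeasurableSpace Ω] (P : Measure Ω) [IsProbabilityMeasure P]
    (B : ℝ → Ω → ℝ)
    (hBmeas : ∀ t ∈ Icc (0:ℝ) 1, Measurable (B t))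
    (hB0 : ∀ᵐ ω ∂P, B 0 ω = 0)
    (hBcont : ∀ᵐ ω ∂P, ContinuousOn (fun t => B t ω) (Icc (0:ℝ) 1))
    (hBindep : ∀ (n : ℕ) (t : Fin (n+1) → ℝ), Monotone t →
      (∀ i, t i ∈ Icc (0:ℝ) 1) →
      iIndepFun (m := fun _ : Fin n => (inferInstance : MeasurableSpace ℝ))
        (fun i ω => B (t i.succ) ω - B (t i.castSucc) ω) P)
    (hBgauss : ∀ s t : ℝ, 0 ≤ s → s ≤ t → t ≤ 1 →
      P.map (fun ω => B t ω - B s ω) = gaussianReal 0 (Real.toNNReal (t - s)))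
    (τ : ℝ) (hτ : 0 < τ) (u : ℝ) (hu : u ∈ Icc (0:ℝ) 1)
    (G : C(Set.Icc (0:ℝ) 1, ℝ) → ℝ)
    (hGmeas : @Measurable _ _ (borel C(Set.Icc (0:ℝ) 1, ℝ)) _ G)
    (hGbdd : ∃ C : ℝ, ∀ x, |G x| ≤ C) :
    ∫ ω, pathEval G (fun t => t * τ / 8 + (Real.sqrt τ / (2 * Real.sqrt 2)) * B t ω)
        * Real.exp ((u - 1) * τ / 4 + (Real.sqrt τ / Real.sqrt 2) * (B u ω - B 1 ω)) ∂P
      = ∫ ω, pathEval G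
          (fun t => (τ / 4) * ((u - |u - t|) / 2)
            + (Real.sqrt τ / (2 * Real.sqrt 2)) * B t ω) ∂P :=
  girsanov_tent_drift_general P B hBmeas hB0 hBcont hBindep hBgauss τ hτ u hu G hGmeas
end

section
/- For every c ∈ ℝ and every t ∈ ℝ, the matrix R_c(t) := C_c(t)·T·C_c(t)ᵀ annihilates the vector g_c(t) := (sin²(ct), −sin(ct)·cos(ct))ᵀ, i.e. R_c(t)·g_c(t) = 0. Moreover, ∫₀¹ |g_c(t)|² dt = ∫₀¹ sin²(ct) dt, which converges to 1/2 as c → ∞. -/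
open Set Matrix Filter intervalIntegral

/-- The vector `g_c(t) := (sin²(ct), −sin(ct)cos(ct))ᵀ`. -/
noncomputable def gvec (c t : ℝ) : Fin 2 → ℝ :=
  ![Real.sin (c * t) ^ 2, -(Real.sin (c * t) * Real.cos (c * t))]


lemma aux_int (c : ℝ) (hc : c ≠ 0) :
    (∫ t in (0:ℝ)..1, Real.sin (c * t) ^ 2)
      = 1/2 - Real.sin c * Real.cos c / (2*c) := by
  have h := intervalIntegral.smul_integral_comp_mul_left (fun x => Real.sin x ^ 2) c (a := 0) (b := 1)
  simp only [smul_eq_mul, mul_zero, mul_one, integral_sin_sq, Real.sin_zero, Real.cos_zero] at h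
  field_simp at h ⊢
  linarith

/-- **The family `g_c` lies in the kernel of `R_c` and is asymptotically non-trivial.**
For all `c, t ∈ ℝ`, `R_c(t) g_c(t) = 0`; moreover `∫₀¹ |g_c(t)|² dt = ∫₀¹ sin²(ct) dt`,
which converges to `1/2` as `c → ∞`. -/
theorem Rmat_annihilates_gvec :
    (∀ c t : ℝ, Rmat c t *ᵥ gvec c t = 0) ∧
    (∀ c : ℝ, (∫ t in (0:ℝ)..1, (gvec c t 0 ^ 2 + gvec c t 1 ^ 2))
        = ∫ t in (0:ℝ)..1, Real.sin (c * t) ^ 2) ∧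
    Tendsto (fun c : ℝ => ∫ t in (0:ℝ)..1, Real.sin (c * t) ^ 2)
      atTop (nhds (1 / 2)) := by
  refine ⟨fun c t => ?_, fun c => ?_, ?_⟩
  · funext i
    fin_cases i <;>
      simp [Rmat, Cmat, Tmat, gvec, mulVec, dotProduct, Matrix.mul_apply,
        Fin.sum_univ_succ] <;> ring
  · apply intervalIntegral.integral_congr
    intro t _
    simp only [gvec, Matrix.cons_val_zero, Matrix.cons_val_one, Matrix.head_cons]
    nlinarith [Real.sin_sq_add_cos_sq (c * t)]
  · have h1 : Tendsto (fun c : ℝ => Real.sin c * Real.cos c / (2*c)) atTop (nhds 0) := by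
      apply squeeze_zero_norm' (a := fun c : ℝ => 1 / (2*c)) ?_ ?_
      · filter_upwards [eventually_gt_atTop (0:ℝ)] with c hc
        rw [Real.norm_eq_abs, abs_div, abs_of_pos (by linarith : (0:ℝ) < 2*c)]
        apply div_le_div_of_nonneg_right ?_ (by linarith)
        calc |Real.sin c * Real.cos c| ≤ |Real.sin c| * |Real.cos c| := by
              rw [abs_mul]
          _ ≤ 1 * 1 := by
              exact mul_le_mul (Real.abs_sin_le_one c) (Real.abs_cos_le_one c)
                (abs_nonneg _) zero_le_one
          _ = 1 := one_mul 1
      · exact tendsto_const_nhds.div_atTop (tendsto_id.const_mul_atTop two_pos)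
    have h2 : Tendsto (fun c : ℝ => 1/2 - Real.sin c * Real.cos c / (2*c)) atTop (nhds (1/2)) := by
      simpa using tendsto_const_nhds.sub h1
    refine h2.congr' ?_
    filter_upwards [eventually_gt_atTop (0:ℝ)] with c hc
    rw [aux_int c hc.ne']
end
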